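/- Fix p, v ∈ ℝ³ with ‖p‖ > r > 0 and v ≠ 0, and let a ∈ ℝ, γ > 0 be arbitrary. Then there exists u ∈ ℝ³ such that a + ⟨p + √(‖p‖² − r²)·v/‖v‖, u⟩ ≥ −γ·h(p,v), where h(p,v) = ⟨p,v⟩ + ‖v‖√(‖p‖² − r²). (Feasibility of the CBF constraint: since the control coefficient vector is nonzero, the constraint can always be satisfied.) -/

import Mathlib

/-! The control coefficient `w = p + (√(‖p‖² - r²) / ‖v‖) • v` satisfies
`⟪p, w⟫ ≥ ‖p‖² - √(‖p‖² - r²) ‖p‖ > 0` by Cauchy–Schwarz, so `w ≠ 0` and the affine map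
`u ↦ a + ⟪w, u⟫` is onto `ℝ`; in particular it reaches any prescribed lower bound. -/

open Real InnerProductSpace
open scoped RealInnerProductSpace

noncomputable section

abbrev E3 := EuclideanSpace ℝ (Fin 3)

section InnerProduct

variable {F : Type*} [NormedAddCommGroup F] [InnerProductSpace ℝ F]

theorem exists_real_inner_eq_of_ne_zero {w : F} (hw : w ≠ 0) (t : ℝ) : ∃ u : F, ⟪w, u⟫ = t :=
  ⟨(t / ⟪w, w⟫) • w, by rw [real_inner_smul_right, div_mul_cancel₀ _ (inner_self_ne_zero.2 hw)]⟩

theorem real_inner_add_div_norm_smul_pos (p v : F) {s : ℝ} (hs : 0 ≤ s) (hsp : s < ‖p‖) :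
    0 < ⟪p, p + (s / ‖v‖) • v⟫ := by
  have hlen : s / ‖v‖ * ‖v‖ ≤ s := by
    rcases eq_or_ne ‖v‖ 0 with hv | hv
    · simpa [hv] using hs
    · rw [div_mul_cancel₀ s hv]
  have hcs : -(‖p‖ * ‖v‖) ≤ ⟪p, v⟫ := neg_le_of_abs_le (abs_real_inner_le_norm p v)
  have hscale : s / ‖v‖ * -(‖p‖ * ‖v‖) ≤ s / ‖v‖ * ⟪p, v⟫ :=
    mul_le_mul_of_nonneg_left hcs (div_nonneg hs (norm_nonneg v))
  rw [inner_add_right, real_inner_smul_right, real_inner_self_eq_norm_sq]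
  nlinarith [norm_nonneg p]

end InnerProduct

theorem sqrt_sq_sub_sq_lt {x r : ℝ} (hr : r ≠ 0) (hx : 0 < x) : √(x ^ 2 - r ^ 2) < x :=
  (sqrt_lt' hx).2 (by linarith [sq_pos_of_ne_zero hr])

theorem stmt6_general (p v : E3) (r a γ : ℝ) (hr : 0 < r) (hpr : r < ‖p‖) :
    ∃ u : E3, a + ⟪p + (Real.sqrt (‖p‖ ^ 2 - r ^ 2) / ‖v‖) • v, u⟫ ≥
      -(γ * (⟪p, v⟫ + ‖v‖ * Real.sqrt (‖p‖ ^ 2 - r ^ 2))) := by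
  have hsqrt : √(‖p‖ ^ 2 - r ^ 2) < ‖p‖ := sqrt_sq_sub_sq_lt hr.ne' (hr.trans hpr)
  have hpos := real_inner_add_div_norm_smul_pos p v (sqrt_nonneg _) hsqrt
  have hw : p + (√(‖p‖ ^ 2 - r ^ 2) / ‖v‖) • v ≠ 0 := by
    intro hzero
    rw [hzero, inner_zero_right] at hpos
    exact hpos.false
  obtain ⟨u, hu⟩ := exists_real_inner_eq_of_ne_zero hw
    (-(γ * (⟪p, v⟫ + ‖v‖ * √(‖p‖ ^ 2 - r ^ 2))) - a)
  exact ⟨u, by rw [hu]; linarith⟩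

theorem stmt6 (p v : E3) (r a γ : ℝ) (hr : 0 < r) (hpr : r < ‖p‖) (hv : v ≠ 0)
    (hγ : 0 < γ) :
    ∃ u : E3, a + ⟪p + (Real.sqrt (‖p‖ ^ 2 - r ^ 2) / ‖v‖) • v, u⟫ ≥
      -(γ * (⟪p, v⟫ + ‖v‖ * Real.sqrt (‖p‖ ^ 2 - r ^ 2))) :=
  stmt6_general p v r a γ hr hpr
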